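/- Let (Z_t)_{t ∈ ℤ} be a stationary 𝒵-valued process with β-mixing coefficients β(k), let a, μ' ≥ 1 be integers, let M > 0, let ℱ be a finite set of measurable functions from 𝒵 to [0, M], and for each ℓ_f ∈ ℱ set L(f) = E[ℓ_f(Z_1)], L̂^spaced(f) = (1/μ') Σ_{k=1}^{μ'} ℓ_f(Z_{1+(k−1)a}), and let σ_f² denote the variance of ℓ_f(Z_1). Then for every family (ε_f)_{f ∈ ℱ} of positive reals: P( ∃ ℓ_f ∈ ℱ : L(f) − L̂^spaced(f) ≥ ε_f ) ≤ Σ_{ℓ_f ∈ ℱ} exp( − μ' ε_f² / (2 σ_f² + (2/3) M ε_f) ) + (μ' − 1) β(a). -/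

import Mathlib

open MeasureTheory ProbabilityTheory

/-- Total variation distance between two measures. -/
noncomputable def tvDist {α : Type*} [MeasurableSpace α] (μ ν : Measure α) : ℝ :=
  ⨆ A : {A : Set α // MeasurableSet A}, |(μ A).toReal - (ν A).toReal|

/-- β-mixing coefficient of the process `Z` under `P`: the supremum over `t` of the
total variation distance between the joint law of `((Z s)_{s ≤ t}, (Z s)_{s ≥ t+k})`
and the product of the marginal laws. -/
noncomputable def betaMix {Ω 𝒵 : Type*} [MeasurableSpace Ω] [MeasurableSpace 𝒵]
    (P : Measure Ω) (Z : ℤ → Ω → 𝒵) (k : ℕ) : ℝ :=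
  ⨆ t : ℤ, tvDist
    (P.map (fun ω => (fun s : {s : ℤ // s ≤ t} => Z s ω,
                      fun s : {s : ℤ // t + k ≤ s} => Z s ω)))
    ((P.map (fun ω => fun s : {s : ℤ // s ≤ t} => Z s ω)).prod
      (P.map (fun ω => fun s : {s : ℤ // t + k ≤ s} => Z s ω)))

/-- Stationarity of the process `Z` under `P`. -/
def Stationary {Ω 𝒵 : Type*} [MeasurableSpace Ω] [MeasurableSpace 𝒵]
    (P : Measure Ω) (Z : ℤ → Ω → 𝒵) : Prop :=
  ∀ s : ℤ, P.map (fun ω => fun t : ℤ => Z (t + s) ω) = P.map (fun ω => fun t : ℤ => Z t ω)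

/-!
The spaced sample `(Z s, Z (s + a), …)` splits into its first point, a functional of the past
up to time `s`, and the rest, a functional of the future from time `s + a`. By the definition of
`β(a)`, making these two parts independent changes the probability of any event by at most
`β(a)`; by stationarity the first point has the law of `Z 1`. Peeling off the points one at a
time replaces the spaced sample by an i.i.d. sample at a total cost of `(μ' - 1) β(a)`.
For the i.i.d. sample, Bernstein's inequality follows from the Chernoff bound, the moment
generating function of the centred loss being controlled through
`exp x ≤ 1 + x + x² / (2 (1 - c / 3))` for `|x| ≤ c < 3`. A union bound over `ℱ` concludes.
-/

open Real
open scoped Nat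

lemma two_mul_three_pow_le_factorial (n : ℕ) : 2 * 3 ^ n ≤ (n + 2)! := by
  induction n with
  | zero => decide
  | succ n ih =>
    calc 2 * 3 ^ (n + 1) = 3 * (2 * 3 ^ n) := by ring
      _ ≤ (n + 3) * (n + 2)! := Nat.mul_le_mul (by omega) ih
      _ = (n + 1 + 2)! := (Nat.factorial_succ (n + 2)).symm

lemma exp_le_one_add_add_sq_div {x c : ℝ} (hxc : |x| ≤ c) (hc : c < 3) :
    exp x ≤ 1 + x + x ^ 2 / (2 * (1 - c / 3)) := by
  have hc0 : 0 ≤ c := (abs_nonneg x).trans hxc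
  have hgeo := (hasSum_geometric_of_lt_one (by positivity) (by linarith : c / 3 < 1)).mul_left
    (x ^ 2 / 2)
  have hterm (n : ℕ) : x ^ (n + 2) / (n + 2)! ≤ x ^ 2 / 2 * (c / 3) ^ n := by
    have hfact : (2 * 3 ^ n : ℝ) ≤ (n + 2)! := by
      exact_mod_cast two_mul_three_pow_le_factorial n
    have hpow : x ^ (n + 2) ≤ x ^ 2 * c ^ n := by
      rw [pow_add, mul_comm]
      refine mul_le_mul_of_nonneg_left ?_ (sq_nonneg x)
      exact (le_abs_self _).trans
        ((abs_pow x n).trans_le (pow_le_pow_left₀ (abs_nonneg x) hxc n))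
    calc x ^ (n + 2) / (n + 2)! ≤ x ^ 2 * c ^ n / (2 * 3 ^ n) :=
          div_le_div₀ (by positivity) hpow (by positivity) hfact
      _ = x ^ 2 / 2 * (c / 3) ^ n := by rw [div_pow]; ring
  have hs := Real.summable_pow_div_factorial x
  have htail : ∑' n : ℕ, x ^ (n + 2) / (n + 2)! ≤ x ^ 2 / (2 * (1 - c / 3)) :=
    (((summable_nat_add_iff 2).2 hs).tsum_le_tsum hterm hgeo.summable).trans_eq
      (hgeo.tsum_eq.trans (by field_simp))
  have hexp : exp x = ∑' n : ℕ, x ^ n / n ! := by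
    rw [exp_eq_exp_ℝ, NormedSpace.exp_eq_tsum_div]
  rw [hexp, ← hs.sum_add_tsum_nat_add 2]
  simpa [Finset.sum_range_succ] using htail

section Bernstein

variable {α : Type*} [MeasurableSpace α] {ν : Measure α} {g : α → ℝ}

lemma mgf_sum_pi {ι : Type*} [Fintype ι] [SigmaFinite ν] (t : ℝ) :
    mgf (fun v : ι → α => ∑ k, g (v k)) (Measure.pi fun _ => ν) t
      = mgf g ν t ^ Fintype.card ι := by
  simp only [mgf, Finset.mul_sum, exp_sum]
  exact integral_fintype_prod_eq_pow (fun z => exp (t * g z))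

variable (ν g) in
def deviationSet (ε : ℝ) (n : ℕ) : Set (Fin n → α) :=
  {v | ε ≤ ν[g] - 1 / n * ∑ k, g (v k)}

lemma measurableSet_deviationSet (hg : Measurable g) (ε : ℝ) (n : ℕ) :
    MeasurableSet (deviationSet ν g ε n) :=
  measurableSet_le measurable_const <| measurable_const.sub <| measurable_const.mul <|
    Finset.measurable_sum _ fun k _ => hg.comp (measurable_pi_apply k)

variable [IsProbabilityMeasure ν] {M : ℝ}

lemma abs_integral_sub_le_of_mem_Icc (hg : Measurable g) (hgM : ∀ z, g z ∈ Set.Icc 0 M)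
    (z : α) : |ν[g] - g z| ≤ M := by
  have hgint : Integrable g ν := .of_mem_Icc 0 M hg.aemeasurable (.of_forall hgM)
  refine abs_sub_le_of_nonneg_of_le (integral_nonneg fun z => (hgM z).1) ?_ (hgM z).1 (hgM z).2
  simpa using integral_mono hgint (integrable_const M) fun z => (hgM z).2

lemma mgf_integral_sub_le (hg : Measurable g) (hgM : ∀ z, g z ∈ Set.Icc 0 M) {t : ℝ}
    (ht : 0 ≤ t) (htM : t * M < 3) :
    mgf (fun z => ν[g] - g z) ν t ≤ exp (t ^ 2 * Var[g; ν] / (2 * (1 - t * M / 3))) := by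
  set m := ν[g]
  set K := t ^ 2 / (2 * (1 - t * M / 3))
  have hdev := abs_integral_sub_le_of_mem_Icc (ν := ν) hg hgM
  have hgint : Integrable g ν := .of_mem_Icc 0 M hg.aemeasurable (.of_forall hgM)
  have hsq : Integrable (fun z => (g z - m) ^ 2) ν := by
    refine .of_mem_Icc 0 (M ^ 2) (by fun_prop) (.of_forall fun z => ⟨sq_nonneg _, ?_⟩)
    obtain ⟨h1, h2⟩ := abs_le.1 (hdev z)
    exact sq_le_sq' (by linarith) (by linarith)
  have hpoint (z : α) : exp (t * (m - g z)) ≤ 1 + t * (m - g z) + K * (g z - m) ^ 2 := by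
    have := exp_le_one_add_add_sq_div (x := t * (m - g z)) (c := t * M)
      (by rw [abs_mul, abs_of_nonneg ht]; exact mul_le_mul_of_nonneg_left (hdev z) ht) htM
    convert this using 1
    ring
  have hcentered : Integrable (fun z => t * (m - g z)) ν :=
    ((integrable_const m).sub hgint).const_mul t
  have hlin : Integrable (fun z => 1 + t * (m - g z)) ν := (integrable_const 1).add hcentered
  calc mgf (fun z => m - g z) ν t
      ≤ ∫ z, 1 + t * (m - g z) + K * (g z - m) ^ 2 ∂ν :=
        integral_mono (integrable_exp_mul_of_le t M ht (measurable_const.sub hg).aemeasurable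
            (.of_forall fun z => (le_abs_self _).trans (hdev z)))
          (hlin.add (hsq.const_mul K)) hpoint
    _ = 1 + K * Var[g; ν] := by
        rw [integral_add hlin (hsq.const_mul K),
          integral_add (integrable_const 1) hcentered, integral_const_mul, integral_const_mul,
          integral_sub (integrable_const m) hgint, variance_eq_integral hg.aemeasurable]
        simp [m]
    _ ≤ exp (t ^ 2 * Var[g; ν] / (2 * (1 - t * M / 3))) := by
        rw [mul_div_right_comm]
        linarith [add_one_le_exp (K * Var[g; ν])]

-- The optimal `t = 3ε / (3σ2 + Mε)` leaves the range `t * M < 3` when `σ2 = 0`;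
-- `t = 3 / (2M)` gives the same exponent there.
lemma exists_chernoff_exponent_eq {σ2 ε : ℝ} (hσ2 : 0 ≤ σ2) (hM : 0 < M) (hε : 0 < ε) :
    ∃ t, 0 ≤ t ∧ t * M < 3 ∧
      -t * ε + t ^ 2 * σ2 / (2 * (1 - t * M / 3)) = -ε ^ 2 / (2 * σ2 + 2 / 3 * M * ε) := by
  rcases hσ2.eq_or_lt with rfl | hσ2
  · refine ⟨3 / (2 * M), by positivity, by field_simp; norm_num, ?_⟩
    field_simp
    ring
  · have hden : 0 < 3 * σ2 + M * ε := by positivity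
    refine ⟨3 * ε / (3 * σ2 + M * ε), by positivity, ?_, ?_⟩
    · rw [div_mul_eq_mul_div, div_lt_iff₀ hden]
      nlinarith
    · have h1 : 1 - 3 * ε / (3 * σ2 + M * ε) * M / 3 = 3 * σ2 / (3 * σ2 + M * ε) := by
        field_simp; ring
      rw [h1]
      field_simp
      ring

theorem measureReal_pi_bernstein (hg : Measurable g) (hM : 0 < M)
    (hgM : ∀ z, g z ∈ Set.Icc 0 M) (n : ℕ) {ε : ℝ} (hε : 0 < ε) :
    (Measure.pi fun _ : Fin n => ν).real (deviationSet ν g ε n)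
      ≤ exp (-(n * ε ^ 2) / (2 * Var[g; ν] + 2 / 3 * M * ε)) := by
  rcases n.eq_zero_or_pos with rfl | hn
  · simp [measureReal_le_one]
  set m := ν[g]
  obtain ⟨t, ht, htM, hexp⟩ := exists_chernoff_exponent_eq (variance_nonneg g ν) hM hε
  have hevent : deviationSet ν g ε n ⊆ {v | n * ε ≤ ∑ k, (m - g (v k))} := by
    intro v (hv : ε ≤ m - 1 / n * ∑ k, g (v k))
    calc n * ε ≤ n * (m - 1 / n * ∑ k, g (v k)) := by gcongr
      _ = ∑ k, (m - g (v k)) := by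
        rw [Finset.sum_sub_distrib]
        field_simp
        simp
  have hsum_le (v : Fin n → α) : ∑ k, (m - g (v k)) ≤ n * M :=
    (Finset.sum_le_sum fun k _ =>
      (le_abs_self _).trans (abs_integral_sub_le_of_mem_Icc hg hgM _)).trans_eq (by simp)
  have hsum_meas : Measurable fun v : Fin n → α => ∑ k, (m - g (v k)) :=
    Finset.measurable_sum _ fun k _ => measurable_const.sub (hg.comp (measurable_pi_apply k))
  calc _ ≤ _ := measureReal_mono hevent
    _ ≤ exp (-t * (n * ε)) *
          mgf (fun v : Fin n → α => ∑ k, (m - g (v k))) (Measure.pi fun _ => ν) t :=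
        measure_ge_le_exp_mul_mgf _ ht <|
          integrable_exp_mul_of_le t (n * M) ht hsum_meas.aemeasurable (.of_forall hsum_le)
    _ ≤ exp (-t * (n * ε)) * exp (t ^ 2 * Var[g; ν] / (2 * (1 - t * M / 3))) ^ n := by
        rw [mgf_sum_pi (g := fun z => m - g z), Fintype.card_fin]
        gcongr
        · exact mgf_nonneg
        · exact mgf_integral_sub_le hg hgM ht htM
    _ = _ := by
        rw [← exp_nat_mul, ← exp_add]
        congr 1
        linear_combination (n : ℝ) * hexp

theorem measureReal_pi_biUnion_deviationSet_le {ℱ : Finset (α → ℝ)}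
    (hFmeas : ∀ f ∈ ℱ, Measurable f) (hM : 0 < M) (hFbdd : ∀ f ∈ ℱ, ∀ z, f z ∈ Set.Icc 0 M)
    {ε : (α → ℝ) → ℝ} (hε : ∀ f ∈ ℱ, 0 < ε f) (n : ℕ) :
    (Measure.pi fun _ : Fin n => ν).real (⋃ f ∈ ℱ, deviationSet ν f (ε f) n)
      ≤ ∑ f ∈ ℱ, exp (-(n * ε f ^ 2) / (2 * Var[f; ν] + 2 / 3 * M * ε f)) :=
  (measureReal_biUnion_finset_le _ _).trans <| Finset.sum_le_sum fun f hf =>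
    measureReal_pi_bernstein (hFmeas f hf) hM (hFbdd f hf) n (hε f hf)

end Bernstein

section TotalVariation

instance isZeroOrProbabilityMeasure_prod {α β : Type*} [MeasurableSpace α]
    [MeasurableSpace β] (μ : Measure α) (ν : Measure β) [IsZeroOrProbabilityMeasure μ]
    [IsZeroOrProbabilityMeasure ν] : IsZeroOrProbabilityMeasure (μ.prod ν) := by
  refine ⟨?_⟩
  rw [← Set.univ_prod_univ, Measure.prod_prod]
  rcases IsZeroOrProbabilityMeasure.measure_univ (μ := μ) with h | h <;>
    rcases IsZeroOrProbabilityMeasure.measure_univ (μ := ν) with h' | h' <;> simp [h, h']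

variable {α : Type*} [MeasurableSpace α] (μ ν : Measure α) [IsZeroOrProbabilityMeasure μ]
  [IsZeroOrProbabilityMeasure ν]

lemma abs_measureReal_sub_le_one (A : Set α) : |μ.real A - ν.real A| ≤ 1 :=
  abs_sub_le_of_nonneg_of_le measureReal_nonneg measureReal_le_one measureReal_nonneg
    measureReal_le_one

lemma tvDist_le_one : tvDist μ ν ≤ 1 :=
  Real.iSup_le (fun A => abs_measureReal_sub_le_one μ ν A) zero_le_one

lemma measureReal_le_add_tvDist {A : Set α} (hA : MeasurableSet A) :
    μ.real A ≤ ν.real A + tvDist μ ν := by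
  have : |μ.real A - ν.real A| ≤ tvDist μ ν :=
    le_ciSup (f := fun A : {A : Set α // MeasurableSet A} => |μ.real A - ν.real A|)
      ⟨1, Set.forall_mem_range.2 fun A => abs_measureReal_sub_le_one μ ν A⟩ ⟨A, hA⟩
  linarith [(abs_le.1 this).2]

end TotalVariation

lemma measureReal_prod_le_add_of_forall_le_add {X Y : Type*} [MeasurableSpace X]
    [MeasurableSpace Y] {μ : Measure X} [IsProbabilityMeasure μ] {ν ρ : Measure Y}
    [IsFiniteMeasure ν] [IsFiniteMeasure ρ] {c : ℝ}
    (h : ∀ D, MeasurableSet D → ν.real D ≤ ρ.real D + c) {C : Set (X × Y)}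
    (hC : MeasurableSet C) :
    (μ.prod ν).real C ≤ (μ.prod ρ).real C + c := by
  have hc : 0 ≤ c := by simpa using h ∅ .empty
  have hslice (D : Set Y) (hD : MeasurableSet D) : ν D ≤ ρ D + ENNReal.ofReal c := by
    rw [← ENNReal.ofReal_toReal (measure_ne_top ν D),
      ← ENNReal.ofReal_toReal (measure_ne_top ρ D),
      ← ENNReal.ofReal_add ENNReal.toReal_nonneg hc]
    exact ENNReal.ofReal_le_ofReal (h D hD)
  have hprod : (μ.prod ν) C ≤ (μ.prod ρ) C + ENNReal.ofReal c := by
    rw [Measure.prod_apply hC, Measure.prod_apply hC]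
    calc ∫⁻ x, ν (Prod.mk x ⁻¹' C) ∂μ
        ≤ ∫⁻ x, ρ (Prod.mk x ⁻¹' C) + ENNReal.ofReal c ∂μ :=
          lintegral_mono fun x => hslice _ (measurable_prodMk_left hC)
      _ = _ := by
        rw [lintegral_add_right _ measurable_const, lintegral_const, measure_univ, mul_one]
  rw [measureReal_def, measureReal_def, ← ENNReal.toReal_ofReal hc,
    ← ENNReal.toReal_add (measure_ne_top _ _) ENNReal.ofReal_ne_top]
  exact ENNReal.toReal_mono (by finiteness) hprod

section BetaMixing

variable {Ω 𝒵 : Type*} [MeasurableSpace 𝒵] {Z : ℤ → Ω → 𝒵}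

variable (Z) in
def spacedSample (s : ℤ) (a n : ℕ) (ω : Ω) : Fin n → 𝒵 :=
  fun j => Z (s + (j * a : ℕ)) ω

lemma spacedSample_succ (s : ℤ) (a n : ℕ) :
    spacedSample Z s a (n + 1) = (MeasurableEquiv.piFinSuccAbove (fun _ => 𝒵) 0).symm ∘
      fun ω => (Z s ω, spacedSample Z (s + a) a n ω) := by
  ext ω j
  refine Fin.cases ?_ (fun j => ?_) j
  · simp [spacedSample]
  · simp [spacedSample, add_one_mul, add_assoc, add_comm]

variable [MeasurableSpace Ω] {P : Measure Ω}

lemma measurable_spacedSample (hZ : ∀ t, Measurable (Z t)) (s : ℤ) (a n : ℕ) :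
    Measurable (spacedSample Z s a n) :=
  measurable_pi_lambda _ fun _ => hZ _

lemma preimage_spacedSample_biUnion_deviationSet (hZ : ∀ t, Measurable (Z t))
    {ℱ : Finset (𝒵 → ℝ)} (hFmeas : ∀ f ∈ ℱ, Measurable f) (ε : (𝒵 → ℝ) → ℝ) (a n : ℕ) :
    spacedSample Z 1 a n ⁻¹' ⋃ f ∈ ℱ, deviationSet (P.map (Z 1)) f (ε f) n
      = {ω | ∃ f ∈ ℱ, ∫ ω', f (Z 1 ω') ∂P
          - (1 / n) * ∑ k : Fin n, f (Z ((1 + (k : ℕ) * a : ℕ) : ℤ) ω) ≥ ε f} := by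
  ext ω
  simp only [Set.mem_ofPred_eq, Set.mem_preimage, Set.mem_iUnion, exists_prop]
  refine exists_congr fun f => and_congr_right fun hf => ?_
  simp only [deviationSet, Set.mem_ofPred_eq, spacedSample, ge_iff_le,
    integral_map (hZ 1).aemeasurable (hFmeas f hf).aestronglyMeasurable]
  push_cast
  rfl

lemma tvDist_le_betaMix [IsZeroOrProbabilityMeasure P] (k : ℕ) (t : ℤ) :
    tvDist
      (P.map (fun ω => (fun s : {s : ℤ // s ≤ t} => Z s ω,
        fun s : {s : ℤ // t + k ≤ s} => Z s ω)))
      ((P.map (fun ω => fun s : {s : ℤ // s ≤ t} => Z s ω)).prod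
        (P.map (fun ω => fun s : {s : ℤ // t + k ≤ s} => Z s ω)))
      ≤ betaMix P Z k := by
  unfold betaMix
  apply le_ciSup (c := t)
  exact ⟨1, Set.forall_mem_range.2 fun _ => tvDist_le_one _ _⟩

lemma measureReal_map_prodMk_le_add_betaMix [IsZeroOrProbabilityMeasure P]
    (hZ : ∀ t, Measurable (Z t)) {k : ℕ} {t : ℤ} {X Y : Type*} [MeasurableSpace X]
    [MeasurableSpace Y] {g : ({s : ℤ // s ≤ t} → 𝒵) → X}
    {h : ({s : ℤ // t + k ≤ s} → 𝒵) → Y}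
    (hg : Measurable g) (hh : Measurable h) {C : Set (X × Y)} (hC : MeasurableSet C) :
    (P.map fun ω => (g fun s => Z s ω, h fun s => Z s ω)).real C ≤
      ((P.map fun ω => g fun s => Z s ω).prod (P.map fun ω => h fun s => Z s ω)).real C
        + betaMix P Z k := by
  have hpast : Measurable fun ω (s : {s : ℤ // s ≤ t}) => Z s ω :=
    measurable_pi_lambda _ fun s => hZ s
  have hfut : Measurable fun ω (s : {s : ℤ // t + k ≤ s}) => Z s ω :=
    measurable_pi_lambda _ fun s => hZ s
  have hgh := hg.prodMap hh
  have hjoint : P.map (fun ω => (g fun s => Z s ω, h fun s => Z s ω)) =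
      (P.map fun ω => ((fun s : {s : ℤ // s ≤ t} => Z s ω),
        fun s : {s : ℤ // t + k ≤ s} => Z s ω)).map (Prod.map g h) := by
    rw [Measure.map_map hgh (hpast.prodMk hfut)]
    rfl
  have hprod : (P.map fun ω => g fun s => Z s ω).prod (P.map fun ω => h fun s => Z s ω) =
      ((P.map fun ω (s : {s : ℤ // s ≤ t}) => Z s ω).prod
        (P.map fun ω (s : {s : ℤ // t + k ≤ s}) => Z s ω)).map (Prod.map g h) := by
    rw [← Measure.map_prod_map _ _ hg hh, Measure.map_map hg hpast, Measure.map_map hh hfut]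
    rfl
  rw [hjoint, hprod, map_measureReal_apply hgh hC, map_measureReal_apply hgh hC]
  exact (measureReal_le_add_tvDist _ _ (hgh hC)).trans (by gcongr; exact tvDist_le_betaMix k t)

lemma Stationary.map_eq (hZ : ∀ t, Measurable (Z t)) (hstat : Stationary P Z) (s t : ℤ) :
    P.map (Z s) = P.map (Z t) := by
  have h := congrArg (Measure.map fun x : ℤ → 𝒵 => x t) (hstat (s - t))
  rw [Measure.map_map (measurable_pi_apply t) (measurable_pi_lambda _ fun u => hZ _),
    Measure.map_map (measurable_pi_apply t) (measurable_pi_lambda _ fun u => hZ _)] at h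
  simpa only [Function.comp_def, add_sub_cancel] using h

theorem measureReal_map_spacedSample_le [IsProbabilityMeasure P] (hZ : ∀ t, Measurable (Z t))
    (hstat : Stationary P Z) (a n : ℕ) (s : ℤ) {B : Set (Fin (n + 1) → 𝒵)}
    (hB : MeasurableSet B) :
    (P.map (spacedSample Z s a (n + 1))).real B
      ≤ (Measure.pi fun _ => P.map (Z 1)).real B + n * betaMix P Z a := by
  have : IsProbabilityMeasure (P.map (Z 1)) :=
    Measure.isProbabilityMeasure_map (hZ 1).aemeasurable
  induction n generalizing s with
  | zero =>
    have hsample :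
        spacedSample Z s a 1 = (MeasurableEquiv.funUnique (Fin 1) 𝒵).symm ∘ Z s := by
      ext ω j
      simp [spacedSample, Fin.fin_one_eq_zero j]
    rw [hsample, ← Measure.map_map (MeasurableEquiv.measurable _) (hZ s), hstat.map_eq hZ s 1,
      (measurePreserving_funUnique (P.map (Z 1)) (Fin 1)).symm.map_eq]
    exact le_add_of_nonneg_right (by simp)
  | succ n ih =>
    set e := MeasurableEquiv.piFinSuccAbove (fun _ : Fin (n + 2) => 𝒵) 0
    have hC : MeasurableSet (e.symm ⁻¹' B) := e.symm.measurable hB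
    have hpi :=
      (measurePreserving_piFinSuccAbove (fun _ : Fin (n + 2) => P.map (Z 1)) 0).symm.map_eq
    calc (P.map (spacedSample Z s a (n + 2))).real B
        = (P.map fun ω => (Z s ω, spacedSample Z (s + a) a (n + 1) ω)).real
            (e.symm ⁻¹' B) := by
          rw [spacedSample_succ, ← Measure.map_map e.symm.measurable
            ((hZ s).prodMk (measurable_spacedSample hZ _ _ _)),
            map_measureReal_apply e.symm.measurable hB]
      _ ≤ ((P.map (Z s)).prod (P.map (spacedSample Z (s + a) a (n + 1)))).real (e.symm ⁻¹' B)
            + betaMix P Z a :=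
          measureReal_map_prodMk_le_add_betaMix (P := P) (t := s) (k := a) hZ
            (g := fun x => x ⟨s, le_rfl⟩)
            (h := fun y (j : Fin (n + 1)) =>
              y ⟨s + a + (j * a : ℕ), le_add_of_nonneg_right (by positivity)⟩)
            (measurable_pi_apply _) (measurable_pi_lambda _ fun _ => measurable_pi_apply _) hC
      _ ≤ ((P.map (Z 1)).prod (Measure.pi fun _ => P.map (Z 1))).real (e.symm ⁻¹' B)
            + n * betaMix P Z a + betaMix P Z a := by
          rw [hstat.map_eq hZ s 1]
          gcongr
          exact measureReal_prod_le_add_of_forall_le_add (fun D hD => ih (s + a) hD) hC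
      _ = _ := by
          rw [← map_measureReal_apply e.symm.measurable hB, hpi]
          push_cast
          ring

end BetaMixing

theorem spaced_points_bernstein_bound_general
    {Ω 𝒵 : Type*} [MeasurableSpace Ω] [MeasurableSpace 𝒵]
    (P : Measure Ω) [IsProbabilityMeasure P]
    (Z : ℤ → Ω → 𝒵) (hZmeas : ∀ t, Measurable (Z t))
    (hstat : Stationary P Z)
    (a μ' : ℕ) (hμ' : 1 ≤ μ')
    (M : ℝ) (hM : 0 < M)
    (ℱ : Finset (𝒵 → ℝ))
    (hFmeas : ∀ f ∈ ℱ, Measurable f)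
    (hFbdd : ∀ f ∈ ℱ, ∀ z, f z ∈ Set.Icc (0 : ℝ) M)
    (ε : (𝒵 → ℝ) → ℝ) (hε : ∀ f ∈ ℱ, 0 < ε f) :
    (P {ω | ∃ f ∈ ℱ,
        ∫ ω', f (Z 1 ω') ∂P
          - (1 / μ') * ∑ k : Fin μ', f (Z ((1 + (k : ℕ) * a : ℕ) : ℤ) ω)
          ≥ ε f}).toReal
      ≤ (∑ f ∈ ℱ, Real.exp (-(μ' * ε f ^ 2)
            / (2 * variance (fun ω => f (Z 1 ω)) P + (2 / 3) * M * ε f)))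
        + ((μ' : ℝ) - 1) * betaMix P Z a := by
  obtain ⟨n, rfl⟩ := Nat.exists_eq_add_of_le' hμ'
  set μ₁ := P.map (Z 1)
  have : IsProbabilityMeasure μ₁ := Measure.isProbabilityMeasure_map (hZmeas 1).aemeasurable
  have hD : MeasurableSet (⋃ f ∈ ℱ, deviationSet μ₁ f (ε f) (n + 1)) :=
    Finset.measurableSet_biUnion ℱ fun f hf => measurableSet_deviationSet (hFmeas f hf) _ _
  calc (P _).toReal
      = (P.map (spacedSample Z 1 a (n + 1))).real
          (⋃ f ∈ ℱ, deviationSet μ₁ f (ε f) (n + 1)) := by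
        rw [map_measureReal_apply (measurable_spacedSample hZmeas 1 a (n + 1)) hD,
          preimage_spacedSample_biUnion_deviationSet hZmeas hFmeas, measureReal_def]
    _ ≤ (Measure.pi fun _ => μ₁).real (⋃ f ∈ ℱ, deviationSet μ₁ f (ε f) (n + 1))
          + n * betaMix P Z a :=
        measureReal_map_spacedSample_le hZmeas hstat a n 1 hD
    _ ≤ ∑ f ∈ ℱ, exp (-(((n + 1 : ℕ) : ℝ) * ε f ^ 2)
            / (2 * Var[f; μ₁] + 2 / 3 * M * ε f)) + n * betaMix P Z a := by
        gcongr
        exact measureReal_pi_biUnion_deviationSet_le hFmeas hM hFbdd hε (n + 1)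
    _ = _ := by
        rw [show ((n + 1 : ℕ) : ℝ) - 1 = n by push_cast; ring]
        refine congrArg (· + _) (Finset.sum_congr rfl fun f hf => ?_)
        rw [(MeasurePreserving.mk (hZmeas 1) rfl).variance_fun_comp (hFmeas f hf).aemeasurable]

/-- Bernstein-type deviation bound on the spaced sample (inequality (17) in the
paper): the probability that some `f ∈ ℱ` has a deviation at least `ε f` between its
risk `L f = E[f (Z 1)]` and its empirical risk on the spaced sample
`(Z 1, Z (1+a), …, Z (1+(μ'-1)a))` is at most
`∑_{f ∈ ℱ} exp(-μ' (ε f)² / (2σ_f² + (2/3) M ε f)) + (μ'-1)β(a)`,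
where `σ_f²` is the variance of `f (Z 1)`. -/
theorem spaced_points_bernstein_bound
    {Ω 𝒵 : Type*} [MeasurableSpace Ω] [MeasurableSpace 𝒵]
    (P : Measure Ω) [IsProbabilityMeasure P]
    (Z : ℤ → Ω → 𝒵) (hZmeas : ∀ t, Measurable (Z t))
    (hstat : Stationary P Z)
    (a μ' : ℕ) (ha : 1 ≤ a) (hμ' : 1 ≤ μ')
    (M : ℝ) (hM : 0 < M)
    (ℱ : Finset (𝒵 → ℝ))
    (hFmeas : ∀ f ∈ ℱ, Measurable f)
    (hFbdd : ∀ f ∈ ℱ, ∀ z, f z ∈ Set.Icc (0 : ℝ) M)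
    (ε : (𝒵 → ℝ) → ℝ) (hε : ∀ f ∈ ℱ, 0 < ε f) :
    (P {ω | ∃ f ∈ ℱ,
        ∫ ω', f (Z 1 ω') ∂P
          - (1 / μ') * ∑ k : Fin μ', f (Z ((1 + (k : ℕ) * a : ℕ) : ℤ) ω)
          ≥ ε f}).toReal
      ≤ (∑ f ∈ ℱ, Real.exp (-(μ' * ε f ^ 2)
            / (2 * variance (fun ω => f (Z 1 ω)) P + (2 / 3) * M * ε f)))
        + ((μ' : ℝ) - 1) * betaMix P Z a :=
  spaced_points_bernstein_bound_general P Z hZmeas hstat a μ' hμ' M hM ℱ hFmeas hFbdd ε hε
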